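/- arXiv:2603.09546 — 3 statements merged into one kernel-verified Lean document; each statement's English description precedes it below -/
import Mathlib

section
/- Let S be a symmetric positive definite linear operator on R^n and let D be a maximal monotone operator on R^n. Then the operator T = (D + S)^{-1} S is firmly non-expansive with respect to the S-norm: for all u, v in the domain of T, ||T(u) − T(v)||_S^2 ≤ ⟨u − v, T(u) − T(v)⟩_S. -/
open Matrix

/-- For `S` symmetric positive definite and `D` maximal monotone, the operator
`T = (D + S)⁻¹ S`, characterized by `Sω - S(Tω) ∈ D(Tω)`, is firmly non-expansive
w.r.t. the `S`-norm: `‖Tu - Tv‖_S² ≤ ⟨u - v, Tu - Tv⟩_S`. -/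
theorem stmt_3 {n : ℕ} (S : Matrix (Fin n) (Fin n) ℝ) (hS : S.PosDef)
    (D : (Fin n → ℝ) → Set (Fin n → ℝ))
    (hmono : ∀ a b x y, x ∈ D a → y ∈ D b → 0 ≤ (x - y) ⬝ᵥ (a - b))
    (hmax : ∀ a x, (∀ b y, y ∈ D b → 0 ≤ (x - y) ⬝ᵥ (a - b)) → x ∈ D a)
    (T : (Fin n → ℝ) → (Fin n → ℝ))
    (hT : ∀ ω, S.mulVec ω - S.mulVec (T ω) ∈ D (T ω)) :
    ∀ u v, (S.mulVec (T u - T v)) ⬝ᵥ (T u - T v) ≤ (S.mulVec (u - v)) ⬝ᵥ (T u - T v) := by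
  intro u v
  have h := hmono (T u) (T v) _ _ (hT u) (hT v)
  have e : (S.mulVec u - S.mulVec (T u) - (S.mulVec v - S.mulVec (T v))) ⬝ᵥ (T u - T v)
      = S.mulVec (u - v) ⬝ᵥ (T u - T v) - S.mulVec (T u - T v) ⬝ᵥ (T u - T v) := by
    simp [Matrix.mulVec_sub, sub_dotProduct]
    ring
  rw [e] at h
  linarith
end

section
/- Let F: R^n → R be convex with L-Lipschitz gradient, S symmetric positive definite with minimum eigenvalue λ_min(S), and 0 < s ≤ 2λ_min(S)/L. Then the operator x ↦ x − s S^{-1}∇F(x) is non-expansive with respect to ||·||_S: for all u, v, ||(u − v) − s S^{-1}(∇F(u) − ∇F(v))||_S ≤ ||u − v||_S. -/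
/-!
Write `d = u - v`, `g = ∇F u - ∇F v` and `w = S⁻¹ g`. By the Baillon–Haddad theorem `∇F` is
`1/L`-cocoercive, `‖g‖² ≤ L ⟪g, d⟫`; it follows from the descent lemma and the gradient
inequality of convexity, both evaluated at a gradient step. Expanding the `S`-norm, the claim
reduces to `s ⟪g, w⟫ ≤ 2 ⟪g, d⟫`, and `⟪g, w⟫ = ⟪S w, w⟫ ≤ ‖g‖² / λ_min` because
`λ_min ‖w‖² ≤ ⟪S w, w⟫ ≤ ‖g‖ ‖w‖`.
-/

open RealInnerProductSpace AffineMap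

section Gradient

variable {E : Type*} [NormedAddCommGroup E] [InnerProductSpace ℝ E] [CompleteSpace E]
  {F : E → ℝ} {F' : E → E} {L : ℝ}

theorem HasGradientAt.hasDerivAt_comp_lineMap {g x y : E} {t : ℝ}
    (h : HasGradientAt F g (lineMap x y t)) :
    HasDerivAt (F ∘ lineMap x y) ⟪g, y - x⟫ t := by
  simpa using HasFDerivAt.comp_hasDerivAt t h hasDerivAt_lineMap

theorem ConvexOn.add_inner_le_of_hasGradientAt (hconv : ConvexOn ℝ Set.univ F) {g x : E}
    (h : HasGradientAt F g x) (y : E) :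
    F x + ⟪g, y - x⟫ ≤ F y := by
  have hslope := (hconv.comp_affineMap (lineMap x y)).le_slope_of_hasDerivAt
    (Set.mem_univ 0) (Set.mem_univ 1) one_pos
    (HasGradientAt.hasDerivAt_comp_lineMap (by simpa using h))
  simp only [slope_def_field, Function.comp_apply, lineMap_apply_zero, lineMap_apply_one,
    sub_zero, div_one] at hslope
  linarith

theorem le_add_inner_add_mul_norm_sq_of_lipschitz_gradient
    (hgrad : ∀ x, HasGradientAt F (F' x) x) (hlip : ∀ u v, ‖F' u - F' v‖ ≤ L * ‖u - v‖)
    (x y : E) :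
    F y ≤ F x + ⟪F' x, y - x⟫ + L / 2 * ‖y - x‖ ^ 2 := by
  set φ : ℝ → ℝ := fun t => F (lineMap x y t) - t * ⟪F' x, y - x⟫ - L / 2 * ‖y - x‖ ^ 2 * t ^ 2
  set φ' : ℝ → ℝ := fun t => ⟪F' (lineMap x y t) - F' x, y - x⟫ - L * ‖y - x‖ ^ 2 * t
  have hφ : ∀ t, HasDerivAt φ (φ' t) t := by
    intro t
    have := ((((hgrad _).hasDerivAt_comp_lineMap (x := x) (y := y) (t := t)).sub
      ((hasDerivAt_id t).mul_const ⟪F' x, y - x⟫)).sub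
      ((hasDerivAt_pow 2 t).const_mul (L / 2 * ‖y - x‖ ^ 2)))
    refine this.congr_deriv ?_
    simp only [φ', inner_sub_left]
    ring
  obtain ⟨c, hc, hφc⟩ := exists_hasDerivAt_eq_slope φ φ' zero_lt_one
    (fun t _ => (hφ t).continuousAt.continuousWithinAt) (fun t _ => hφ t)
  have hφ'c : φ' c ≤ 0 := calc
    φ' c ≤ ‖F' (lineMap x y c) - F' x‖ * ‖y - x‖ - L * ‖y - x‖ ^ 2 * c :=
        sub_le_sub_right (real_inner_le_norm _ _) _
    _ ≤ L * ‖lineMap x y c - x‖ * ‖y - x‖ - L * ‖y - x‖ ^ 2 * c := by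
        gcongr; exact hlip _ _
    _ = 0 := by
        rw [lineMap_apply_module', add_sub_cancel_right, norm_smul,
          Real.norm_of_nonneg hc.1.le]
        ring
  simp only [φ, lineMap_apply_zero, lineMap_apply_one, sub_zero, div_one] at hφc
  linarith

theorem ConvexOn.add_inner_add_norm_sq_sub_div_le (hconv : ConvexOn ℝ Set.univ F)
    (hgrad : ∀ x, HasGradientAt F (F' x) x) (hL : 0 < L)
    (hlip : ∀ u v, ‖F' u - F' v‖ ≤ L * ‖u - v‖) (x y : E) :
    F x + ⟪F' x, y - x⟫ + ‖F' y - F' x‖ ^ 2 / (2 * L) ≤ F y := by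
  set h := F' y - F' x
  -- the convexity lower bound at `x` and the descent upper bound at `y`, both evaluated at `z`
  set z := y - L⁻¹ • h
  have hx := hconv.add_inner_le_of_hasGradientAt (hgrad x) z
  have hy := le_add_inner_add_mul_norm_sq_of_lipschitz_gradient hgrad hlip y z
  have hzx : z - x = (y - x) - L⁻¹ • h := by simp only [z]; abel
  have hzy : z - y = -(L⁻¹ • h) := by simp only [z]; abel
  have hh : L⁻¹ * ⟪F' y, h⟫ - L⁻¹ * ⟪F' x, h⟫ = L⁻¹ * ‖h‖ ^ 2 := by
    rw [← mul_sub, ← inner_sub_left, real_inner_self_eq_norm_sq]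
  rw [hzx, inner_sub_right, real_inner_smul_right] at hx
  rw [hzy, inner_neg_right, real_inner_smul_right, norm_neg, norm_smul, Real.norm_eq_abs,
    abs_of_pos (inv_pos.mpr hL)] at hy
  have hquad : L / 2 * (L⁻¹ * ‖h‖) ^ 2 = L⁻¹ * ‖h‖ ^ 2 / 2 := by field_simp
  have hdiv : ‖h‖ ^ 2 / (2 * L) = L⁻¹ * ‖h‖ ^ 2 / 2 := by field_simp
  rw [hquad] at hy
  rw [hdiv]
  linarith

/-- Baillon–Haddad. -/
theorem ConvexOn.norm_sq_sub_le_mul_inner_of_lipschitz_gradient (hconv : ConvexOn ℝ Set.univ F)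
    (hgrad : ∀ x, HasGradientAt F (F' x) x) (hL : 0 < L)
    (hlip : ∀ u v, ‖F' u - F' v‖ ≤ L * ‖u - v‖) (u v : E) :
    ‖F' u - F' v‖ ^ 2 ≤ L * ⟪F' u - F' v, u - v⟫ := by
  have huv := hconv.add_inner_add_norm_sq_sub_div_le hgrad hL hlip u v
  have hvu := hconv.add_inner_add_norm_sq_sub_div_le hgrad hL hlip v u
  rw [norm_sub_rev] at huv
  have hsum : ⟪F' v, u - v⟫ + ⟪F' u, v - u⟫ = -⟪F' u - F' v, u - v⟫ := by
    rw [← neg_sub u v, inner_neg_right, inner_sub_left]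
    ring
  have : ‖F' u - F' v‖ ^ 2 / L ≤ ⟪F' u - F' v, u - v⟫ := by
    have h2 : ‖F' u - F' v‖ ^ 2 / L = 2 * (‖F' u - F' v‖ ^ 2 / (2 * L)) := by field_simp
    linarith
  rwa [div_le_iff₀' hL] at this

end Gradient

section Preconditioner

variable {E : Type*} [NormedAddCommGroup E] [InnerProductSpace ℝ E]

theorem mul_inner_le_norm_sq_of_mul_norm_sq_le_inner {c : ℝ} (hc : 0 ≤ c) {g w : E}
    (h : c * ‖w‖ ^ 2 ≤ ⟪g, w⟫) :
    c * ⟪g, w⟫ ≤ ‖g‖ ^ 2 := by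
  have hcs := real_inner_le_norm g w
  nlinarith [mul_le_mul_of_nonneg_left hcs hc, norm_nonneg g, norm_nonneg w,
    sq_nonneg (‖g‖ - c * ‖w‖)]

theorem LinearMap.IsSymmetric.inner_map_sub_smul_self {S : E →ₗ[ℝ] E} (hS : S.IsSymmetric)
    (d w : E) (s : ℝ) :
    ⟪S (d - s • w), d - s • w⟫ = ⟪S d, d⟫ - 2 * s * ⟪S w, d⟫ + s ^ 2 * ⟪S w, w⟫ := by
  have hdw : ⟪S d, w⟫ = ⟪S w, d⟫ := by rw [hS d w, real_inner_comm]
  simp only [map_sub, map_smul, inner_sub_left, inner_sub_right, real_inner_smul_left,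
    real_inner_smul_right, hdw]
  ring

theorem LinearMap.IsSymmetric.inner_map_sub_smul_le {S : E →ₗ[ℝ] E} (hS : S.IsSymmetric)
    {lmin L s : ℝ} (hlmin : 0 < lmin) (hmin : ∀ x, lmin * ‖x‖ ^ 2 ≤ ⟪S x, x⟫)
    (hL : 0 < L) (hs : 0 ≤ s) (hs2 : s ≤ 2 * lmin / L) {d w : E}
    (hcoco : ‖S w‖ ^ 2 ≤ L * ⟪S w, d⟫) :
    ⟪S (d - s • w), d - s • w⟫ ≤ ⟪S d, d⟫ := by
  have hw := mul_inner_le_norm_sq_of_mul_norm_sq_le_inner hlmin.le (hmin w)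
  have hwd : 0 ≤ ⟪S w, d⟫ := nonneg_of_mul_nonneg_right (by nlinarith) hL
  have hsL : s * L ≤ 2 * lmin := (le_div_iff₀ hL).mp hs2
  have hstep : s * ⟪S w, w⟫ ≤ 2 * ⟪S w, d⟫ := by
    refine le_of_mul_le_mul_left ?_ hlmin
    nlinarith [mul_le_mul_of_nonneg_right hsL hwd]
  rw [hS.inner_map_sub_smul_self]
  nlinarith [mul_le_mul_of_nonneg_left hstep hs]

end Preconditioner

theorem stmt_7_general {n : ℕ}
    (F : EuclideanSpace ℝ (Fin n) → ℝ) (F' : EuclideanSpace ℝ (Fin n) → EuclideanSpace ℝ (Fin n))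
    (hconv : ConvexOn ℝ Set.univ F)
    (hgrad : ∀ x, HasGradientAt F (F' x) x)
    (L : ℝ) (hL : 0 < L) (hlip : ∀ u v, ‖F' u - F' v‖ ≤ L * ‖u - v‖)
    (S Sinv : EuclideanSpace ℝ (Fin n) →ₗ[ℝ] EuclideanSpace ℝ (Fin n))
    (hsymm : ∀ x y, ⟪S x, y⟫ = ⟪x, S y⟫)
    (hSinv : ∀ x, S (Sinv x) = x)
    (lmin : ℝ) (hlmin : 0 < lmin)
    (hmin : ∀ x, lmin * ‖x‖ ^ 2 ≤ ⟪S x, x⟫)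
    (s : ℝ) (hs : 0 < s) (hs2 : s ≤ 2 * lmin / L) :
    ∀ u v,
      ⟪S ((u - v) - s • (Sinv (F' u) - Sinv (F' v))),
          (u - v) - s • (Sinv (F' u) - Sinv (F' v))⟫ ≤
        ⟪S (u - v), u - v⟫ := by
  intro u v
  have hSw : S (Sinv (F' u) - Sinv (F' v)) = F' u - F' v := by rw [map_sub, hSinv, hSinv]
  have hcoco := hconv.norm_sq_sub_le_mul_inner_of_lipschitz_gradient hgrad hL hlip u v
  rw [← hSw] at hcoco
  exact LinearMap.IsSymmetric.inner_map_sub_smul_le hsymm hlmin hmin hL hs.le hs2 hcoco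

/-- The operator `x ↦ x - s S⁻¹∇F(x)` is non-expansive in the `S`-norm when `F` is
convex with `L`-Lipschitz gradient and `0 < s ≤ 2 λ_min(S)/L` (stated with squared norms). -/
theorem stmt_7 {n : ℕ}
    (F : EuclideanSpace ℝ (Fin n) → ℝ) (F' : EuclideanSpace ℝ (Fin n) → EuclideanSpace ℝ (Fin n))
    (hconv : ConvexOn ℝ Set.univ F)
    (hgrad : ∀ x, HasGradientAt F (F' x) x)
    (L : ℝ) (hL : 0 < L) (hlip : ∀ u v, ‖F' u - F' v‖ ≤ L * ‖u - v‖)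
    (S Sinv : EuclideanSpace ℝ (Fin n) →ₗ[ℝ] EuclideanSpace ℝ (Fin n))
    (hsymm : ∀ x y, ⟪S x, y⟫ = ⟪x, S y⟫)
    (hpos : ∀ x, x ≠ 0 → 0 < ⟪S x, x⟫)
    (hSinv : ∀ x, S (Sinv x) = x)
    (lmin : ℝ) (hlmin : 0 < lmin)
    (hmin : ∀ x, lmin * ‖x‖ ^ 2 ≤ ⟪S x, x⟫)
    (s : ℝ) (hs : 0 < s) (hs2 : s ≤ 2 * lmin / L) :
    ∀ u v,
      ⟪S ((u - v) - s • (Sinv (F' u) - Sinv (F' v))),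
          (u - v) - s • (Sinv (F' u) - Sinv (F' v))⟫ ≤
        ⟪S (u - v), u - v⟫ :=
  stmt_7_general F F' hconv hgrad L hL hlip S Sinv hsymm hSinv lmin hlmin hmin s hs hs2
end

section
/- Let F: R^n → R be convex and differentiable with L-Lipschitz gradient, S symmetric positive definite with minimum eigenvalue λ_min(S), s > 0, and define x⁺ = x − s S^{-1}∇F(x). Then for every z ∈ R^n: s F(z) ≥ s F(x⁺) − (1/2)||z − x||_S^2 + (1/2)||z − x⁺||_S^2 + (1/2)(1 − sL/λ_min(S))||x − x⁺||_S^2. -/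
open RealInnerProductSpace

/-!
Write `x⁺ = x - s S⁻¹∇F(x)`, so that `S (x - x⁺) = s ∇F(x)`. Convexity at `x` and the descent
lemma from `x` to `x⁺` give `F x⁺ ≤ F z + ⟪∇F(x), x⁺ - z⟫ + (L/2)‖x - x⁺‖²`. Multiplying by `s`
turns the inner product into `⟪S (x - x⁺), x⁺ - z⟫`, which the three-point identity for the
symmetric form `⟪S ·, ·⟫` expresses through the three `S`-norms, and
`‖x - x⁺‖² ≤ ‖x - x⁺‖_S² / λ_min` absorbs the quadratic term.
-/

section Gradient

variable {E : Type*} [NormedAddCommGroup E] [InnerProductSpace ℝ E] [CompleteSpace E]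
  {F : E → ℝ}

theorem HasGradientAt.hasDerivAt_comp_add_smul {g x d : E} {t : ℝ}
    (hF : HasGradientAt F g (x + t • d)) :
    HasDerivAt (fun t : ℝ => F (x + t • d)) ⟪g, d⟫ t := by
  have hline : HasDerivAt (fun t : ℝ => x + t • d) d t := by
    simpa using ((hasDerivAt_id t).smul_const d).const_add x
  have h := (hasGradientAt_iff_hasFDerivAt.mp hF).comp_hasDerivAt t hline
  simp only [InnerProductSpace.toDual_apply_apply] at h
  exact h

theorem ConvexOn.add_inner_gradient_le (hconv : ConvexOn ℝ Set.univ F) {g x : E}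
    (hF : HasGradientAt F g x) (z : E) :
    F x + ⟪g, z - x⟫ ≤ F z := by
  have hline : ConvexOn ℝ Set.univ (fun t : ℝ => F (x + t • (z - x))) := by
    simpa [Function.comp_def, AffineMap.lineMap_apply_module', add_comm] using
      hconv.comp_affineMap (AffineMap.lineMap x z : ℝ →ᵃ[ℝ] E)
  have hderiv : HasDerivAt (fun t : ℝ => F (x + t • (z - x))) ⟪g, z - x⟫ 0 :=
    HasGradientAt.hasDerivAt_comp_add_smul (by simpa using hF)
  have h := hline.le_slope_of_hasDerivAt (Set.mem_univ 0) (Set.mem_univ 1) one_pos hderiv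
  simp only [slope_def_field, one_smul, add_sub_cancel, zero_smul, add_zero, sub_zero, div_one] at h
  linarith

theorem le_add_inner_gradient_add_sq_of_lipschitz {F' : E → E}
    (hgrad : ∀ x, HasGradientAt F (F' x) x) {L : ℝ}
    (hlip : ∀ u v, ‖F' u - F' v‖ ≤ L * ‖u - v‖) (x y : E) :
    F y ≤ F x + ⟪F' x, y - x⟫ + L / 2 * ‖y - x‖ ^ 2 := by
  set d := y - x
  -- Compare `t ↦ F (x + t • d)` on `[0, 1]` with its quadratic upper model via their derivatives.
  have hF (t : ℝ) : HasDerivAt (fun t : ℝ => F (x + t • d)) ⟪F' (x + t • d), d⟫ t :=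
    (hgrad _).hasDerivAt_comp_add_smul
  have hB (t : ℝ) : HasDerivAt (fun t : ℝ => F x + t * ⟪F' x, d⟫ + L / 2 * t ^ 2 * ‖d‖ ^ 2)
      (⟪F' x, d⟫ + L * t * ‖d‖ ^ 2) t := by
    have h := (((hasDerivAt_id' t).mul_const ⟪F' x, d⟫).const_add (F x)).fun_add
      (((hasDerivAt_pow 2 t).const_mul (L / 2)).mul_const (‖d‖ ^ 2))
    exact h.congr_deriv (by ring)
  have hslope (t : ℝ) (ht : 0 ≤ t) : ⟪F' (x + t • d), d⟫ ≤ ⟪F' x, d⟫ + L * t * ‖d‖ ^ 2 := by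
    calc ⟪F' (x + t • d), d⟫ = ⟪F' x, d⟫ + ⟪F' (x + t • d) - F' x, d⟫ := by
          rw [inner_sub_left]; ring
      _ ≤ ⟪F' x, d⟫ + ‖F' (x + t • d) - F' x‖ * ‖d‖ := by
          gcongr; exact real_inner_le_norm _ _
      _ ≤ ⟪F' x, d⟫ + L * ‖(x + t • d) - x‖ * ‖d‖ := by gcongr; exact hlip _ _
      _ = ⟪F' x, d⟫ + L * t * ‖d‖ ^ 2 := by
          simp [norm_smul, abs_of_nonneg ht]; ring
  have hle := image_le_of_deriv_right_le_deriv_boundary (a := 0) (b := 1)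
    (fun t _ => (hF t).continuousAt.continuousWithinAt) (fun t _ => (hF t).hasDerivWithinAt)
    (by simp) (fun t _ => (hB t).continuousAt.continuousWithinAt)
    (fun t _ => (hB t).hasDerivWithinAt) (fun t ht => hslope t ht.1)
    (Set.right_mem_Icc.2 zero_le_one)
  simpa [d] using hle

end Gradient

theorem LinearMap.IsSymmetric.two_mul_inner_sub_sub {E : Type*} [NormedAddCommGroup E]
    [InnerProductSpace ℝ E] {S : E →ₗ[ℝ] E} (hS : S.IsSymmetric) (x y z : E) :
    2 * ⟪S (x - y), z - y⟫ =
      ⟪S (z - y), z - y⟫ + ⟪S (x - y), x - y⟫ - ⟪S (z - x), z - x⟫ := by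
  have hz : z - x = (z - y) - (x - y) := by abel
  rw [hz]
  generalize z - y = a, x - y = b
  rw [map_sub, inner_sub_left, inner_sub_right, inner_sub_right, hS a b, real_inner_comm (S b)]
  ring

theorem stmt_11_general {n : ℕ}
    (F : EuclideanSpace ℝ (Fin n) → ℝ) (F' : EuclideanSpace ℝ (Fin n) → EuclideanSpace ℝ (Fin n))
    (hconv : ConvexOn ℝ Set.univ F)
    (hgrad : ∀ x, HasGradientAt F (F' x) x)
    (L : ℝ) (hL : 0 < L) (hlip : ∀ u v, ‖F' u - F' v‖ ≤ L * ‖u - v‖)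
    (S Sinv : EuclideanSpace ℝ (Fin n) →ₗ[ℝ] EuclideanSpace ℝ (Fin n))
    (hsymm : ∀ x y, ⟪S x, y⟫ = ⟪x, S y⟫)
    (hSinv : ∀ x, S (Sinv x) = x)
    (lmin : ℝ) (hlmin : 0 < lmin)
    (hmin : ∀ x, lmin * ‖x‖ ^ 2 ≤ ⟪S x, x⟫)
    (s : ℝ) (hs : 0 < s) :
    ∀ x z : EuclideanSpace ℝ (Fin n),
      s * F (x - s • Sinv (F' x)) - (1/2) * ⟪S (z - x), z - x⟫ +
          (1/2) * ⟪S (z - (x - s • Sinv (F' x))), z - (x - s • Sinv (F' x))⟫ +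
          (1/2) * (1 - s * L / lmin) *
            ⟪S (x - (x - s • Sinv (F' x))), x - (x - s • Sinv (F' x))⟫ ≤
        s * F z := by
  intro x z
  set xp := x - s • Sinv (F' x)
  have hstep : S (x - xp) = s • F' x := by simp [xp, hSinv]
  have hconvex := hconv.add_inner_gradient_le (hgrad x) z
  have hdescent := le_add_inner_gradient_add_sq_of_lipschitz hgrad hlip x xp
  have hthree := LinearMap.IsSymmetric.two_mul_inner_sub_sub hsymm x xp z
  have hsplit : s * ⟪F' x, z - x⟫ = ⟪S (x - xp), z - xp⟫ + s * ⟪F' x, xp - x⟫ := by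
    rw [hstep, real_inner_smul_left, ← mul_add, ← inner_add_right, sub_add_sub_cancel]
  have hnorm : ‖xp - x‖ ^ 2 ≤ ⟪S (x - xp), x - xp⟫ / lmin := by
    rw [le_div_iff₀ hlmin, norm_sub_rev]; linarith [hmin (x - xp)]
  have hquad : s * (L / 2 * ‖xp - x‖ ^ 2) ≤ s * L / lmin / 2 * ⟪S (x - xp), x - xp⟫ := by
    calc s * (L / 2 * ‖xp - x‖ ^ 2) ≤ s * (L / 2 * (⟪S (x - xp), x - xp⟫ / lmin)) := by gcongr
      _ = _ := by ring
  linarith [mul_le_mul_of_nonneg_left hdescent hs.le, mul_le_mul_of_nonneg_left hconvex hs.le]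

/-- Key descent inequality for the gradient step `x⁺ = x - s S⁻¹∇F(x)`:
for all `z`, `sF(z) ≥ sF(x⁺) - ½‖z-x‖_S² + ½‖z-x⁺‖_S² + ½(1 - sL/λ_min(S))‖x-x⁺‖_S²`. -/
theorem stmt_11 {n : ℕ}
    (F : EuclideanSpace ℝ (Fin n) → ℝ) (F' : EuclideanSpace ℝ (Fin n) → EuclideanSpace ℝ (Fin n))
    (hconv : ConvexOn ℝ Set.univ F)
    (hgrad : ∀ x, HasGradientAt F (F' x) x)
    (L : ℝ) (hL : 0 < L) (hlip : ∀ u v, ‖F' u - F' v‖ ≤ L * ‖u - v‖)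
    (S Sinv : EuclideanSpace ℝ (Fin n) →ₗ[ℝ] EuclideanSpace ℝ (Fin n))
    (hsymm : ∀ x y, ⟪S x, y⟫ = ⟪x, S y⟫)
    (hpos : ∀ x, x ≠ 0 → 0 < ⟪S x, x⟫)
    (hSinv : ∀ x, S (Sinv x) = x)
    (lmin : ℝ) (hlmin : 0 < lmin)
    (hmin : ∀ x, lmin * ‖x‖ ^ 2 ≤ ⟪S x, x⟫)
    (s : ℝ) (hs : 0 < s) :
    ∀ x z : EuclideanSpace ℝ (Fin n),
      s * F (x - s • Sinv (F' x)) - (1/2) * ⟪S (z - x), z - x⟫ +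
          (1/2) * ⟪S (z - (x - s • Sinv (F' x))), z - (x - s • Sinv (F' x))⟫ +
          (1/2) * (1 - s * L / lmin) *
            ⟪S (x - (x - s • Sinv (F' x))), x - (x - s • Sinv (F' x))⟫ ≤
        s * F z :=
  stmt_11_general F F' hconv hgrad L hL hlip S Sinv hsymm hSinv lmin hlmin hmin s hs
end
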